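/- Let V be a finite set, J a multigraph on V, k an integer, and μ' = ⌈(k−1)/2⌉. Let R be a finite laminar family of subsets of V and S ⊆ V with 1 ≤ |R(S)| ≤ |R(V\S)|. Assume: (i) for every inclusion-minimal member R of R(S), d_J(R∩S, R\S) ≥ μ'; (ii) if R(S) has a unique maximal member R (one containing all other members of R(S)), then 2·d_J((V\R)∩S, (V\R)\S) ≥ k − 4. Then d_J(S) ≥ k − 2. -/

import Mathlib

open Finset

variable {V : Type*} [Fintype V] [DecidableEq V]

/-- `d_m(S,T)`: total multiplicity of edges of the multigraph `m` with one end in `S` and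
the other in `T` (for disjoint `S`, `T`). -/
def dBetween (m : V → V → ℕ) (S T : Finset V) : ℕ := ∑ u ∈ S, ∑ v ∈ T, m u v

/-- `d_m(S) = d_m(S, V \ S)`. -/
def degS (m : V → V → ℕ) (S : Finset V) : ℕ := dBetween m S Sᶜ

/-- A family of sets is laminar if any two members are either disjoint or nested. -/
def LaminarF (F : Finset (Finset V)) : Prop :=
  ∀ A ∈ F, ∀ B ∈ F, Disjoint A B ∨ A ⊆ B ∨ B ⊆ A

/-- `R(S)`: the members of the family `R` that overlap `S`, i.e. those `A ∈ R` with
`A ∩ S`, `A \ S` and `S \ A` all nonempty. -/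
def overlapFam (R : Finset (Finset V)) (S : Finset V) : Finset (Finset V) :=
  R.filter fun A => (A ∩ S).Nonempty ∧ (A \ S).Nonempty ∧ (S \ A).Nonempty

/-! Since `d_J(A ∩ S, A \ S)` is monotone in `A`, hypothesis (i) bounds it by `μ'` for every
member `A` of `R(S)`, not only the minimal ones. Take a maximal member `A` of `R(S)`. If it
contains all of `R(S)`, the edges counted for `A` and for `V \ A` are disjoint parts of the cut
`d_J(S)`, so `2 d_J(S) ≥ 2μ' + k - 4 ≥ 2k - 5`. Otherwise laminarity yields a member `B`
disjoint from `A`, and `d_J(S) ≥ 2μ' ≥ k - 1`. -/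

lemma dBetween_mono {α : Type*} (J : α → α → ℕ) {S' S T' T : Finset α} (hS : S' ⊆ S)
    (hT : T' ⊆ T) : dBetween J S' T' ≤ dBetween J S T :=
  calc ∑ u ∈ S', ∑ v ∈ T', J u v ≤ ∑ u ∈ S', ∑ v ∈ T, J u v :=
        sum_le_sum fun _ _ => sum_le_sum_of_subset hT
    _ ≤ ∑ u ∈ S, ∑ v ∈ T, J u v := sum_le_sum_of_subset hS

lemma dBetween_inter_sdiff_add_le_degS (J : V → V → ℕ) (S : Finset V) {A B : Finset V}
    (hAB : Disjoint A B) :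
    dBetween J (A ∩ S) (A \ S) + dBetween J (B ∩ S) (B \ S) ≤ degS J S := by
  have hsdiff : ∀ C : Finset V, C \ S ⊆ Sᶜ := fun C v hv =>
    mem_compl.mpr (mem_sdiff.mp hv).2
  calc dBetween J (A ∩ S) (A \ S) + dBetween J (B ∩ S) (B \ S)
      ≤ dBetween J (A ∩ S) Sᶜ + dBetween J (B ∩ S) Sᶜ :=
        add_le_add (dBetween_mono J subset_rfl (hsdiff A)) (dBetween_mono J subset_rfl (hsdiff B))
    _ = dBetween J ((A ∩ S) ∪ (B ∩ S)) Sᶜ :=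
        (sum_union (hAB.mono inter_subset_left inter_subset_left)).symm
    _ ≤ degS J S :=
        dBetween_mono J (union_subset inter_subset_right inter_subset_right) subset_rfl

lemma le_dBetween_inter_sdiff_of_forall_minimal {α : Type*} [DecidableEq α] (J : α → α → ℕ)
    (S : Finset α) {F : Finset (Finset α)} {c : ℤ}
    (hmin : ∀ A ∈ F, (∀ B ∈ F, ¬ B ⊂ A) → c ≤ (dBetween J (A ∩ S) (A \ S) : ℤ))
    {A : Finset α} (hA : A ∈ F) :
    c ≤ (dBetween J (A ∩ S) (A \ S) : ℤ) := by
  obtain ⟨M, hMA, hM⟩ := F.exists_le_minimal hA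
  calc c ≤ (dBetween J (M ∩ S) (M \ S) : ℤ) := hmin M hM.prop fun B hB => hM.not_lt hB
    _ ≤ dBetween J (A ∩ S) (A \ S) := by
      exact_mod_cast
        dBetween_mono J (inter_subset_inter_right hMA) (sdiff_subset_sdiff hMA subset_rfl)

lemma LaminarF.mono {α : Type*} {F G : Finset (Finset α)} (hF : LaminarF F) (hGF : G ⊆ F) :
    LaminarF G :=
  fun A hA B hB => hF A (hGF hA) B (hGF hB)

lemma LaminarF.disjoint_of_maximal {α : Type*} {F : Finset (Finset α)} (hF : LaminarF F)
    {A B : Finset α} (hA : Maximal (· ∈ F) A) (hB : B ∈ F) (hBA : ¬ B ⊆ A) : Disjoint A B := by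
  rcases hF A hA.prop B hB with hAB | hAB | hBA'
  · exact hAB
  · exact absurd (hA.2 hB hAB) hBA
  · exact absurd hBA' hBA

lemma le_two_mul_ceil_half {α : Type*} [Field α] [LinearOrder α] [IsStrictOrderedRing α]
    [FloorRing α] (a : α) : a ≤ 2 * ⌈a / 2⌉ := by
  linarith [Int.le_ceil (a / 2)]

theorem degree_bound_overlapping_cut'_general
    (J : V → V → ℕ)
    (k : ℤ) (μ' : ℤ) (hμ : μ' = ⌈((k : ℚ) - 1) / 2⌉)
    (R : Finset (Finset V)) (hlam : LaminarF R) (S : Finset V)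
    (h1 : 1 ≤ (overlapFam R S).card)
    (hmin : ∀ A ∈ overlapFam R S, (∀ B ∈ overlapFam R S, ¬ B ⊂ A) →
      μ' ≤ (dBetween J (A ∩ S) (A \ S) : ℤ))
    (hmax : ∀ A ∈ overlapFam R S, (∀ B ∈ overlapFam R S, B ⊆ A) →
      k - 4 ≤ 2 * (dBetween J (Aᶜ ∩ S) (Aᶜ \ S) : ℤ)) :
    k - 2 ≤ (degS J S : ℤ) := by
  have hkμ : k - 1 ≤ 2 * μ' := by
    have := le_two_mul_ceil_half ((k : ℚ) - 1)
    rw [← hμ] at this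
    exact_mod_cast this
  have hμA : ∀ A ∈ overlapFam R S, μ' ≤ (dBetween J (A ∩ S) (A \ S) : ℤ) :=
    fun _ hA => le_dBetween_inter_sdiff_of_forall_minimal J S hmin hA
  obtain ⟨A, hA⟩ := (overlapFam R S).exists_maximal (card_pos.mp h1)
  by_cases hall : ∀ B ∈ overlapFam R S, B ⊆ A
  · have hcut := dBetween_inter_sdiff_add_le_degS J S (disjoint_compl_right (a := A))
    have hμA' := hμA A hA.prop
    have hcompl := hmax A hA.prop hall
    omega
  · obtain ⟨B, hB, hBA⟩ := not_forall₂.mp hall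
    have hAB := (hlam.mono (filter_subset _ R)).disjoint_of_maximal hA hB hBA
    have hcut := dBetween_inter_sdiff_add_le_degS J S hAB
    have hμA' := hμA A hA.prop
    have hμB := hμA B hB
    omega

/-- Lemma 5.7: if `1 ≤ |R(S)| ≤ |R(V \ S)|`, every inclusion-minimal member `R'` of `R(S)`
has `d_J(R' ∩ S, R' \ S) ≥ μ' = ⌈(k-1)/2⌉`, and a unique maximal member `R'` of `R(S)`
(if one exists) has `2 d_J((V \ R') ∩ S, (V \ R') \ S) ≥ k - 4`, then `d_J(S) ≥ k - 2`. -/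
theorem degree_bound_overlapping_cut'
    (J : V → V → ℕ) (hJsymm : ∀ a b, J a b = J b a)
    (k : ℤ) (μ' : ℤ) (hμ : μ' = ⌈((k : ℚ) - 1) / 2⌉)
    (R : Finset (Finset V)) (hlam : LaminarF R) (S : Finset V)
    (h1 : 1 ≤ (overlapFam R S).card)
    (h2 : (overlapFam R S).card ≤ (overlapFam R Sᶜ).card)
    (hmin : ∀ A ∈ overlapFam R S, (∀ B ∈ overlapFam R S, ¬ B ⊂ A) →
      μ' ≤ (dBetween J (A ∩ S) (A \ S) : ℤ))
    (hmax : ∀ A ∈ overlapFam R S, (∀ B ∈ overlapFam R S, B ⊆ A) →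
      k - 4 ≤ 2 * (dBetween J (Aᶜ ∩ S) (Aᶜ \ S) : ℤ)) :
    k - 2 ≤ (degS J S : ℤ) :=
  degree_bound_overlapping_cut'_general J k μ' hμ R hlam S h1 hmin hmax
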